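/- An ℝ-linear isometric automorphism f of ℍⁿ belongs to TSp(ℍⁿ) ∩ U(ℍⁿ) if and only if there exist a unit complex number c (i.e. c ∈ ℂ = ℝ ⊕ ℝi ⊆ ℍ with |c| = 1) and g ∈ Sp(ℍⁿ) such that f(v) = c • g(v) for all v ∈ ℍⁿ; in other words, TSp(ℍⁿ) ∩ U(ℍⁿ) = U(1)·Sp(ℍⁿ). -/

import Mathlib

/-!
If `f` is `κ`-semilinear and `ℂ`-linear, comparing `f (z • v) = κ z • f v` with
`f (z • v) = z • f v` at a nonzero vector shows that `κ` fixes `ℂ ⊆ ℍ`. An automorphism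
fixing `i` is determined by `u = κ j`, which squares to `-1` and anticommutes with `i`, hence
`u = ζ j` for a unit complex number `ζ`; if `c² = ζ` then `r ↦ c r c̄` agrees with `κ` on `i`
and `j`, so `κ` is conjugation by `c`. Then `g = c̄ • f` is `ℍ`-linear and `f = c • g`.
Conversely, `c • g` is semilinear for conjugation by `c` and `ℂ`-linear because `ℂ` is
commutative.
-/

open Quaternion

/-- The embedding of `ℂ = ℝ ⊕ ℝi` into `ℍ`. -/
def cq (z : ℂ) : ℍ := ⟨z.re, z.im, 0, 0⟩

/-- `ℍⁿ`, the orthogonal direct sum of `n` copies of `ℍ`, as a real inner product space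
and left `ℍ`-module. -/
abbrev Hn (n : ℕ) := PiLp 2 (fun _ : Fin n => ℍ)

open ComplexConjugate

theorem norm_eq_one_of_mul_self_eq_neg_one {R : Type*} [NormedDivisionRing R] {u : R}
    (h : u * u = -1) : ‖u‖ = 1 := by
  rw [← pow_eq_one_iff_of_nonneg (norm_nonneg u) two_ne_zero, sq, ← norm_mul, h, norm_neg,
    norm_one]

namespace Unitary

section MulAction

variable {R E : Type*} [Monoid R] [StarMul R] [MulAction R E]

@[simp]
theorem star_smul_smul (u : unitary R) (x : E) : star (u : R) • (u : R) • x = x := by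
  rw [smul_smul, star_mul_self_of_mem u.2, one_smul]

@[simp]
theorem smul_star_smul (u : unitary R) (x : E) : (u : R) • star (u : R) • x = x := by
  rw [smul_smul, mul_star_self_of_mem u.2, one_smul]

end MulAction

theorem eq_conjStarAlgAut_smul_iff {S R E : Type*} [Semiring R] [StarMul R] [SMul S R]
    [IsScalarTower S R R] [SMulCommClass S R R] [MulAction R E] (u : unitary R) (r : R)
    (a b : E) :
    a = conjStarAlgAut S R u r • b ↔ star (u : R) • a = r • star (u : R) • b := by
  rw [← smul_left_cancel_iff (star u), Submonoid.smul_def, Submonoid.smul_def, coe_star,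
    smul_smul, smul_smul, conjStarAlgAut_apply, ← mul_assoc, ← mul_assoc,
    star_mul_self_of_mem u.2, one_mul]

end Unitary

noncomputable def LinearIsometryEquiv.unitarySMul {R E : Type*} [NormedRing R] [StarRing R]
    [CStarRing R] [Nontrivial R] [SeminormedAddCommGroup E] [Module R E] [NormSMulClass R E]
    [Module ℝ E] [SMulCommClass ℝ R E] (u : unitary R) : E ≃ₗᵢ[ℝ] E where
  toFun v := (u : R) • v
  invFun v := star (u : R) • v
  left_inv := Unitary.star_smul_smul u
  right_inv := Unitary.smul_star_smul u
  map_add' := smul_add _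
  map_smul' r v := (smul_comm r (u : R) v).symm
  norm_map' v := by
    change ‖(u : R) • v‖ = ‖v‖
    rw [norm_smul, CStarRing.norm_coe_unitary, one_mul]

theorem cq_eq_coeComplex (z : ℂ) : cq z = z := rfl

namespace Quaternion

def j : ℍ := ⟨0, 0, 1, 0⟩

@[simp] theorem re_j : j.re = 0 := rfl
@[simp] theorem imI_j : j.imI = 0 := rfl
@[simp] theorem imJ_j : j.imJ = 1 := rfl
@[simp] theorem imK_j : j.imK = 0 := rfl

theorem j_mul_j : j * j = -1 := by
  ext <;> simp

theorem j_mul_I : j * Complex.I = -(Complex.I * j) := by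
  ext <;> simp

theorem j_mul_coeComplex (z : ℂ) : j * z = (conj z : ℂ) * j := by
  ext <;> simp

theorem star_coeComplex (z : ℂ) : star (z : ℍ) = (conj z : ℂ) := by
  ext <;> simp

theorem norm_coeComplex (z : ℂ) : ‖(z : ℍ)‖ = ‖z‖ := by
  rw [← sq_eq_sq₀ (norm_nonneg _) (norm_nonneg _), ← Complex.normSq_eq_norm_sq, sq,
    ← normSq_eq_norm_mul_self, normSq_def', Complex.normSq_apply]
  simp [sq]

theorem mem_unitary_of_norm_eq_one {a : ℍ} (ha : ‖a‖ = 1) : a ∈ unitary ℍ := by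
  have : normSq a = 1 := by rw [normSq_eq_norm_mul_self, ha, one_mul]
  exact ⟨by rw [star_mul_self, this, coe_one], by rw [self_mul_star, this, coe_one]⟩

noncomputable def unitaryOfComplex {c : ℂ} (hc : ‖c‖ = 1) : unitary ℍ :=
  ⟨c, mem_unitary_of_norm_eq_one (by rwa [norm_coeComplex])⟩

theorem eq_coeComplex_mul_j_of_mul_I_eq_neg {u : ℍ} (h : u * Complex.I = -(Complex.I * u)) :
    u = (⟨u.imJ, u.imK⟩ : ℂ) * j := by
  have hre : u.re = 0 := by
    linarith [show u.re = -u.re by simpa using congrArg QuaternionAlgebra.imI h]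
  have him : u.imI = 0 := by
    linarith [show -u.imI = u.imI by simpa using congrArg QuaternionAlgebra.re h]
  ext <;> simp [hre, him]

theorem exists_eq_conjStarAlgAut_of_forall_apply_coeComplex (κ : ℍ ≃ₐ[ℝ] ℍ)
    (hκ : ∀ z : ℂ, κ z = z) :
    ∃ (c : ℂ) (hc : ‖c‖ = 1),
      κ = (Unitary.conjStarAlgAut ℝ ℍ (unitaryOfComplex hc)).toAlgEquiv := by
  set u := κ j
  have hu2 : u * u = -1 := by rw [← map_mul, j_mul_j, map_neg, map_one]
  have hu : u = (⟨u.imJ, u.imK⟩ : ℂ) * j := by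
    refine eq_coeComplex_mul_j_of_mul_I_eq_neg ?_
    rw [← hκ, ← map_mul, ← map_mul, j_mul_I, map_neg]
  set ζ : ℂ := ⟨u.imJ, u.imK⟩
  have hζ : ‖ζ‖ = 1 :=
    calc ‖ζ‖ = ‖(ζ : ℍ) * j‖ := by
          rw [norm_mul, norm_coeComplex, norm_eq_one_of_mul_self_eq_neg_one j_mul_j, mul_one]
      _ = 1 := by rw [← hu, norm_eq_one_of_mul_self_eq_neg_one hu2]
  obtain ⟨c, hcζ⟩ := IsAlgClosed.exists_pow_nat_eq ζ two_pos
  have hc : ‖c‖ = 1 := by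
    rwa [← pow_eq_one_iff_of_nonneg (norm_nonneg c) two_ne_zero, ← norm_pow, hcζ]
  refine ⟨c, hc, AlgEquiv.coe_toAlgHom_injective (Quaternion.hom_ext ?_ ?_)⟩
  · show κ (Complex.I : ℂ) = c * (Complex.I : ℂ) * star (c : ℍ)
    rw [hκ, star_coeComplex, ← coeComplex_mul, ← coeComplex_mul, mul_right_comm,
      Complex.mul_conj, ← Complex.sq_norm, hc]
    simp
  · show κ j = c * j * star (c : ℍ)
    rw [star_coeComplex, mul_assoc, j_mul_coeComplex, Complex.conj_conj, ← mul_assoc,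
      ← coeComplex_mul, ← sq, hcζ]
    exact hu

end Quaternion

/-- An ℝ-linear isometric automorphism `f` of `ℍⁿ` lies in `TSp(ℍⁿ) ∩ U(ℍⁿ)` iff
`f = c • g` for some unit complex number `c` and some `g ∈ Sp(ℍⁿ)`;
that is, `TSp(ℍⁿ) ∩ U(ℍⁿ) = U(1)·Sp(ℍⁿ)`. -/
theorem mem_TSp_inter_U_iff (n : ℕ) (f : Hn n ≃ₗᵢ[ℝ] Hn n) :
    ((∃ κ : ℍ ≃ₐ[ℝ] ℍ, ∀ (r : ℍ) (v : Hn n), f (r • v) = κ r • f v) ∧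
      (∀ (z : ℂ) (v : Hn n), f (cq z • v) = cq z • f v)) ↔
    ∃ (c : ℂ) (g : Hn n ≃ₗᵢ[ℝ] Hn n),
      ‖c‖ = 1 ∧ (∀ (r : ℍ) (v : Hn n), g (r • v) = r • g v) ∧
      ∀ v : Hn n, f v = cq c • g v := by
  simp only [cq_eq_coeComplex]
  constructor
  · rintro ⟨⟨κ, hκ⟩, hℂ⟩
    rcases subsingleton_or_nontrivial (Hn n) with _ | _
    · exact ⟨1, f, norm_one, fun _ _ => Subsingleton.elim _ _, fun _ => Subsingleton.elim _ _⟩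
    obtain ⟨w, hw⟩ := exists_ne (0 : Hn n)
    have hκℂ (z : ℂ) : κ z = z :=
      smul_left_injective ℍ hw <| by simpa using (hκ z (f.symm w)).symm.trans (hℂ z _)
    obtain ⟨c, hc, rfl⟩ := exists_eq_conjStarAlgAut_of_forall_apply_coeComplex κ hκℂ
    refine ⟨c, f.trans (.unitarySMul (star (unitaryOfComplex hc))), hc, fun r v => ?_,
      fun v => (Unitary.smul_star_smul (unitaryOfComplex hc) (f v)).symm⟩
    exact (Unitary.eq_conjStarAlgAut_smul_iff (S := ℝ) _ r _ _).1 (hκ r v)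
  · rintro ⟨c, g, hc, hg, hfg⟩
    refine ⟨⟨(Unitary.conjStarAlgAut ℝ ℍ (unitaryOfComplex hc)).toAlgEquiv, fun r v => ?_⟩,
      fun z v => ?_⟩
    · have hfu : ∀ v, f v = (unitaryOfComplex hc : ℍ) • g v := hfg
      rw [StarAlgEquiv.coe_toAlgEquiv, Unitary.eq_conjStarAlgAut_smul_iff, hfu, hfu, hg,
        Unitary.star_smul_smul, Unitary.star_smul_smul]
    · rw [hfg, hg, hfg, smul_smul, smul_smul, ← coeComplex_mul, ← coeComplex_mul, mul_comm]
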